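/- arXiv:1504.06998 — 2 statements merged into one kernel-verified Lean document; each statement's English description precedes it below -/
import Mathlib

section
/- Monotonicity of modular global sensitivity: with the setup of the stretched function, if w′ ≤ w coordinatewise with w′, w ∈ [0,1]ⁿ, then for every coordinate i, the modular global sensitivity satisfies Sᵢ(R, w′) ≤ Sᵢ(R, w). -/
/-- Two profiles are neighbors on coordinate `i`: they agree on all other coordinates. -/
def NeighborAt {n : ℕ} (i : Fin n) (d d' : Fin n → ℝ) : Prop :=
  ∀ j, j ≠ i → d j = d' j

/-- Componentwise stretching of a vector by `w` (i.e. `diag(w)·x`). -/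
def stretch {n : ℕ} (w : Fin n → ℝ) (x : Fin n → ℝ) : Fin n → ℝ :=
  fun i => w i * x i

def SemiBalanced {n : ℕ} (D : Set (Fin n → ℝ)) : Prop :=
  ∀ w : Fin n → ℝ, (∀ i, w i ∈ Set.Icc (0:ℝ) 1) → ∀ x ∈ D, stretch w x ∈ D

/-- Modular global sensitivity of `f` in coordinate `i` over domain `E`. -/
noncomputable def modSens {n : ℕ} (f : (Fin n → ℝ) → ℝ) (E : Set (Fin n → ℝ)) (i : Fin n) : ℝ :=
  sSup {r | ∃ d ∈ E, ∃ d' ∈ E, NeighborAt i d d' ∧ r = |f d - f d'|}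

/-! Since `w' j = w j * (w' j / w j)` with `w' j / w j ∈ [0, 1]` (also when `w j = 0`, as then
`w' j = 0`), semi-balancedness of `D` gives `diag(w') D ⊆ diag(w) D`, and the modular sensitivity
is monotone in the domain. -/

theorem stretch_stretch {n : ℕ} (w u x : Fin n → ℝ) :
    stretch w (stretch u x) = stretch (w * u) x := by
  ext j
  simp only [stretch, Pi.mul_apply, mul_assoc]

theorem SemiBalanced.stretch_image_subset {n : ℕ} {D : Set (Fin n → ℝ)} (hD : SemiBalanced D)
    {w w' : Fin n → ℝ} (hw' : ∀ i, 0 ≤ w' i) (hle : ∀ i, w' i ≤ w i) :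
    stretch w' '' D ⊆ stretch w '' D := by
  have hw : ∀ i, 0 ≤ w i := fun i => (hw' i).trans (hle i)
  have hratio : ∀ i, (w' / w) i ∈ Set.Icc (0 : ℝ) 1 := fun i =>
    ⟨div_nonneg (hw' i) (hw i), div_le_one_of_le₀ (hle i) (hw i)⟩
  have hfactor : w * (w' / w) = w' := by
    ext i
    exact mul_div_cancel_of_imp' fun h => le_antisymm (h ▸ hle i) (hw' i)
  rintro _ ⟨x, hx, rfl⟩
  exact ⟨stretch (w' / w) x, hD _ hratio x hx, by rw [stretch_stretch, hfactor]⟩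

def modSensSet {n : ℕ} (f : (Fin n → ℝ) → ℝ) (E : Set (Fin n → ℝ)) (i : Fin n) :
    Set ℝ :=
  {r | ∃ d ∈ E, ∃ d' ∈ E, NeighborAt i d d' ∧ r = |f d - f d'|}

theorem modSens_nonneg {n : ℕ} (f : (Fin n → ℝ) → ℝ) (E : Set (Fin n → ℝ))
    (i : Fin n) : 0 ≤ modSens f E i :=
  Real.sSup_nonneg <| by
    rintro _ ⟨d, -, d', -, -, rfl⟩
    exact abs_nonneg _

theorem modSens_mono {n : ℕ} {f : (Fin n → ℝ) → ℝ} {E F : Set (Fin n → ℝ)} {i : Fin n}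
    (hEF : E ⊆ F) (hbdd : BddAbove (modSensSet f F i)) : modSens f E i ≤ modSens f F i :=
  Real.sSup_le
    (by
      rintro _ ⟨d, hd, d', hd', hnb, rfl⟩
      exact le_csSup hbdd ⟨d, hEF hd, d', hEF hd', hnb, rfl⟩)
    (modSens_nonneg f F i)

theorem modSens_stretch_mono_general {n : ℕ} (f : (Fin n → ℝ) → ℝ) (D : Set (Fin n → ℝ))
    (hD : SemiBalanced D) (w w' : Fin n → ℝ)
    (hw' : ∀ i, w' i ∈ Set.Icc (0:ℝ) 1)
    (hle : ∀ i, w' i ≤ w i)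
    (hbdd : ∀ i, BddAbove {r | ∃ d ∈ stretch w '' D, ∃ d' ∈ stretch w '' D, NeighborAt i d d' ∧ r = |f d - f d'|}) :
    ∀ i, modSens f (stretch w' '' D) i ≤ modSens f (stretch w '' D) i := fun i =>
  modSens_mono (hD.stretch_image_subset (fun j => (hw' j).1) hle) (hbdd i)

theorem modSens_stretch_mono {n : ℕ} (f : (Fin n → ℝ) → ℝ) (D : Set (Fin n → ℝ))
    (hD : SemiBalanced D) (w w' : Fin n → ℝ)
    (hw : ∀ i, w i ∈ Set.Icc (0:ℝ) 1) (hw' : ∀ i, w' i ∈ Set.Icc (0:ℝ) 1)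
    (hle : ∀ i, w' i ≤ w i)
    (hbdd : ∀ i, BddAbove {r | ∃ d ∈ stretch w '' D, ∃ d' ∈ stretch w '' D, NeighborAt i d d' ∧ r = |f d - f d'|}) :
    ∀ i, modSens f (stretch w' '' D) i ≤ modSens f (stretch w '' D) i :=
  modSens_stretch_mono_general f D hD w w' hw' hle hbdd
end

section
/- Protection of the privacy vector: let f : D → ℝ with finite global sensitivity S(f) > 0, and for each privacy vector v ∈ [0,1]ⁿ let T(v) = diag(w(v)) be a shrinkage matrix where the i-th diagonal entry wᵢ depends only on vᵢ. Let f̂(d, v) = f(T(v)·d) + N with N Laplace with scale S(f)/ε. Then for any fixed profile d ∈ D (with D semi-balanced) and any two privacy vectors v ∼ v⁽ⁱ⁾ differing only in coordinate i, the output densities satisfy p_{f̂(d,v)}(t) ≤ exp(ε)·p_{f̂(d,v⁽ⁱ⁾)}(t) for all t ∈ ℝ. -/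
def Neighbor {n : ℕ} (d d' : Fin n → ℝ) : Prop :=
  ∃ i, NeighborAt i d d'

noncomputable def globSens {n : ℕ} (f : (Fin n → ℝ) → ℝ) (D : Set (Fin n → ℝ)) : ℝ :=
  sSup {r | ∃ d ∈ D, ∃ d' ∈ D, Neighbor d d' ∧ r = |f d - f d'|}

noncomputable def lapDensity (σ x : ℝ) : ℝ :=
  (1 / (2 * σ)) * Real.exp (-|x| / σ)

open Real

theorem NeighborAt.comp {n : ℕ} {i : Fin n} {v v' : Fin n → ℝ} (h : NeighborAt i v v')
    (w : ℝ → ℝ) : NeighborAt i (fun j => w (v j)) (fun j => w (v' j)) :=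
  fun j hj => congrArg w (h j hj)

theorem NeighborAt.stretch {n : ℕ} {i : Fin n} {u u' : Fin n → ℝ} (h : NeighborAt i u u')
    (d : Fin n → ℝ) : NeighborAt i (stretch u d) (stretch u' d) :=
  fun j hj => by simp only [_root_.stretch, h j hj]

theorem abs_sub_le_globSens {n : ℕ} {f : (Fin n → ℝ) → ℝ} {D : Set (Fin n → ℝ)}
    (hbdd : BddAbove {r | ∃ d ∈ D, ∃ d' ∈ D, Neighbor d d' ∧ r = |f d - f d'|})
    {d d' : Fin n → ℝ} (hd : d ∈ D) (hd' : d' ∈ D) (h : Neighbor d d') :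
    |f d - f d'| ≤ globSens f D :=
  le_csSup hbdd ⟨d, hd, d', hd', h, rfl⟩

theorem lapDensity_sub_le_exp_mul {σ ε a b : ℝ} (hσ : 0 < σ) (hab : |a - b| ≤ ε * σ)
    (t : ℝ) : lapDensity σ (t - a) ≤ exp ε * lapDensity σ (t - b) := by
  have hshift : |t - b| - |t - a| ≤ |a - b| := by
    simpa using abs_sub_abs_le_abs_sub (t - b) (t - a)
  have hexp : -|t - a| / σ ≤ ε + -|t - b| / σ := by
    have h : (|t - b| - |t - a|) / σ ≤ ε := (div_le_iff₀ hσ).2 (hshift.trans hab)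
    rw [neg_div, neg_div]
    linarith [sub_div |t - b| |t - a| σ]
  calc lapDensity σ (t - a)
      ≤ 1 / (2 * σ) * exp (ε + -|t - b| / σ) := by
        unfold lapDensity; gcongr
    _ = exp ε * lapDensity σ (t - b) := by
        rw [lapDensity, exp_add]; ring

/-- `w` maps a privacy weight to a shrinkage factor, so the `i`-th diagonal entry of `T(v)` is
`w (v i)`. -/
theorem privacy_vector_protection {n : ℕ} (f : (Fin n → ℝ) → ℝ) (D : Set (Fin n → ℝ))
    (hD : SemiBalanced D) (ε : ℝ) (hε : 0 < ε)
    (hSf : 0 < globSens f D)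
    (hbdd : BddAbove {r | ∃ d ∈ D, ∃ d' ∈ D, Neighbor d d' ∧ r = |f d - f d'|})
    (w : ℝ → ℝ) (hw : ∀ s, s ∈ Set.Icc (0:ℝ) 1 → w s ∈ Set.Icc (0:ℝ) 1) :
    ∀ d ∈ D, ∀ i : Fin n, ∀ v v' : Fin n → ℝ,
      (∀ j, v j ∈ Set.Icc (0:ℝ) 1) → (∀ j, v' j ∈ Set.Icc (0:ℝ) 1) →
      NeighborAt i v v' → ∀ t : ℝ,
      lapDensity (globSens f D / ε) (t - f (stretch (fun j => w (v j)) d))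
        ≤ Real.exp ε * lapDensity (globSens f D / ε) (t - f (stretch (fun j => w (v' j)) d)) := by
  intro d hd i v v' hv hv' hvv' t
  have hmem : ∀ u : Fin n → ℝ, (∀ j, u j ∈ Set.Icc (0:ℝ) 1) →
      stretch (fun j => w (u j)) d ∈ D :=
    fun u hu => hD _ (fun j => hw _ (hu j)) d hd
  have hsens := abs_sub_le_globSens hbdd (hmem v hv) (hmem v' hv') ⟨i, (hvv'.comp w).stretch d⟩
  refine lapDensity_sub_le_exp_mul (div_pos hSf hε) ?_ t
  rwa [mul_div_cancel₀ _ hε.ne']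
end
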